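/- Let R ∈ H₀ be an integrally closed local ring such that R ≠ T(R), and assume the maximal ideal M of R is finitely generated. Then there is no ring T properly containing R such that Spec(R) = Spec(T). -/

import Mathlib

/-- A subset `S` of a ring `A` is (the underlying set of) a prime ideal of the subring `B`. -/
def IsPrimeIdealSetOf {A : Type*} [CommRing A] (B : Subring A) (S : Set A) : Prop :=
  ∃ I : Ideal B, I.IsPrime ∧ Subtype.val '' (I : Set B) = S

/-- `Spec(R) = Spec(T)` for a subring `R` of `T`: a subset of `T` is a prime ideal of `T`
iff it is a prime ideal of `R`. -/
def SpecEq {T : Type*} [CommRing T] (R : Subring T) : Prop :=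
  ∀ S : Set T, (∃ J : Ideal T, J.IsPrime ∧ (J : Set T) = S) ↔ IsPrimeIdealSetOf R S
/-- An ideal `P` of `R` is divided if it is comparable with every ideal of `R`. -/
def Ideal.IsDivided {R : Type*} [CommRing R] (P : Ideal R) : Prop :=
  ∀ I : Ideal R, I ≤ P ∨ P ≤ I

/-- `R ∈ H` : the nilradical of `R` is a divided prime ideal. -/
def MemH (R : Type*) [CommRing R] : Prop :=
  (nilradical R).IsPrime ∧ (nilradical R).IsDivided
/-- `R ∈ H₀` : `R ∈ H` and `Nil(R) = Z(R)` (the nilradical is the set of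
zero-divisors). -/
def MemH0 (R : Type*) [CommRing R] : Prop :=
  MemH R ∧ (nilradical R : Set R) = {x : R | x ∉ nonZeroDivisors R}

/-! If `Spec R = Spec T`, the maximal ideal `M` of `R` is an ideal of `T` and every maximal ideal
of `T` lies in `R`. As `R ≠ T(R)`, `M` contains a regular element `s`. For `t ∈ T` write
`t * s = x ∈ M`; then `x / s ∈ T(R)` maps `M` into itself, so by the determinant trick (`M` is
finitely generated and `s ∈ M` is regular) it is integral over `R`, hence `x = s * r` with
`r ∈ R`. Now `t - r` annihilates `s ≠ 0`, so it lies in a maximal ideal of `T`, hence in `R`. -/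

theorem isIntegral_of_mul_mem_submodule {R A : Type*} [CommRing R] [CommRing A] [Algebra R A]
    (N : Submodule R A) (hN : N.FG) {a : A} (haN : a ∈ N) (ha : a ∈ nonZeroDivisors A)
    {x : A} (hx : ∀ n ∈ N, x * n ∈ N) : IsIntegral R x := by
  let A' : Subalgebra R A :=
    { carrier := {y | ∀ n ∈ N, y * n ∈ N}
      mul_mem' := fun {y z} hy hz n hn => mul_assoc y z n ▸ hy _ (hz _ hn)
      add_mem' := fun hy hz n hn => (add_mul _ _ n).symm ▸ N.add_mem (hy _ hn) (hz _ hn)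
      algebraMap_mem' := fun r n hn => Algebra.smul_def r n ▸ N.smul_mem r hn }
  let f : A' →ₐ[R] Module.End R N :=
    AlgHom.ofLinearMap
      { toFun := fun y => (LinearMap.mulLeft R y.1).restrict y.2
        map_add' := fun y z => by ext; exact add_mul _ _ _
        map_smul' := fun r y => by ext; exact smul_mul_assoc _ _ _ }
      (by ext; exact one_mul _)
      (fun y z => by ext; exact mul_assoc _ _ _)
  have hf : Function.Injective f := by
    rw [injective_iff_map_eq_zero]
    intro y hy
    have : y.1 * a = 0 := congr_arg Subtype.val (LinearMap.congr_fun hy ⟨a, haN⟩)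
    exact Subtype.ext ((mem_nonZeroDivisors_iff.mp ha).2 _ this)
  have : Module.Finite R N := .of_fg hN
  change IsIntegral R (A'.val ⟨x, hx⟩)
  rw [isIntegral_algHom_iff A'.val Subtype.val_injective]
  exact (isIntegral_algHom_iff (A := A') (B := Module.End R N) f hf).mp
    (Algebra.IsIntegral.isIntegral _)

section FractionRing

variable {R K : Type*} [CommRing R] [CommRing K] [Algebra R K] [IsFractionRing R K]

theorem exists_mem_nonZeroDivisors_not_isUnit (h : ¬ Function.Surjective (algebraMap R K)) :
    ∃ s ∈ nonZeroDivisors R, ¬ IsUnit s := by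
  rwa [← IsFractionRing.self_iff_surjective, IsFractionRing.self_iff_nonZeroDivisors_le_isUnit,
    SetLike.not_le_iff_exists] at h

theorem mem_range_algebraMap_of_mul_mem (hic : integralClosure R K = ⊥) {I : Ideal R}
    (hI : I.FG) {s : R} (hsI : s ∈ I) (hs : s ∈ nonZeroDivisors R) {y : K}
    (hy : ∀ m ∈ I, ∃ m' ∈ I, algebraMap R K m' = y * algebraMap R K m) :
    y ∈ Set.range (algebraMap R K) := by
  have hint : IsIntegral R y := by
    refine isIntegral_of_mul_mem_submodule (Submodule.map (Algebra.linearMap R K) I)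
      (Submodule.FG.map _ hI) (Submodule.mem_map_of_mem hsI)
      (IsLocalization.map_units K ⟨s, hs⟩).mem_nonZeroDivisors ?_
    rintro _ ⟨m, hm, rfl⟩
    exact hy m hm
  rw [← Algebra.mem_bot, ← hic]
  exact hint

end FractionRing

namespace SpecEq

variable {T : Type*} [CommRing T] {R : Subring T}

theorem exists_mul_eq (h : SpecEq R) {P : Ideal R} (hP : P.IsPrime) (t : T) {p : R}
    (hp : p ∈ P) : ∃ p' ∈ P, (p' : T) = t * p := by
  obtain ⟨J, -, hJ⟩ := (h _).mpr ⟨P, hP, rfl⟩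
  have hpJ : (p : T) ∈ (J : Set T) := hJ ▸ ⟨p, hp, rfl⟩
  have : t * p ∈ (J : Set T) := J.mul_mem_left t hpJ
  rwa [hJ] at this

theorem mem_of_mem_ne_top (h : SpecEq R) {I : Ideal T} (hI : I ≠ ⊤) {t : T} (ht : t ∈ I) :
    t ∈ R := by
  obtain ⟨J, hJ, hIJ⟩ := Ideal.exists_le_maximal I hI
  obtain ⟨P, -, hP⟩ := (h J).mp ⟨J, hJ.isPrime, rfl⟩
  have : t ∈ (J : Set T) := hIJ ht
  rw [← hP] at this
  obtain ⟨p, -, rfl⟩ := this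
  exact p.2

theorem mem_of_mul_eq_zero (h : SpecEq R) {s : T} (hs : s ≠ 0) {u : T} (hu : u * s = 0) :
    u ∈ R := by
  refine h.mem_of_mem_ne_top (I := (Submodule.span T {s}).annihilator) ?_
    ((Submodule.mem_annihilator_span_singleton _ _).mpr hu)
  rwa [Ne, Ideal.eq_top_iff_one, Submodule.mem_annihilator_span_singleton, one_smul]

theorem eq_top (h : SpecEq R) (hic : integralClosure R (FractionRing R) = ⊥) {P : Ideal R}
    (hP : P.IsPrime) (hPfg : P.FG) {s : R} (hsP : s ∈ P) (hs : s ∈ nonZeroDivisors R) :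
    R = ⊤ := by
  refine eq_top_iff.mpr fun t _ => ?_
  obtain ⟨x, -, hx⟩ := h.exists_mul_eq hP t hsP
  obtain ⟨r, hr⟩ :
      IsLocalization.mk' (FractionRing R) x ⟨s, hs⟩ ∈ Set.range (algebraMap R _) := by
    refine mem_range_algebraMap_of_mul_mem hic hPfg hsP hs fun m hm => ?_
    obtain ⟨m', hm', hmt⟩ := h.exists_mul_eq hP t hm
    refine ⟨m', hm', ?_⟩
    rw [mul_comm, IsLocalization.mul_mk'_eq_mk'_of_mul, IsLocalization.eq_mk'_iff_mul_eq,
      ← map_mul]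
    congr 1
    apply Subtype.val_injective
    push_cast
    rw [hmt, hx]
    ring
  have hxr : x = s * r := by
    rw [IsLocalization.eq_mk'_iff_mul_eq, ← map_mul] at hr
    exact (IsFractionRing.injective R (FractionRing R) hr).symm.trans (mul_comm _ _)
  have htr : (t - r) * s = 0 := by
    rw [sub_mul, ← hx, hxr]
    push_cast
    ring
  have : Nontrivial R :=
    nontrivial_of_ne 0 1 fun h01 => P.ne_top_iff_one.mp hP.ne_top (h01 ▸ P.zero_mem)
  have hs0 : (s : T) ≠ 0 := by exact_mod_cast nonZeroDivisors.ne_zero hs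
  simpa using R.add_mem (h.mem_of_mul_eq_zero hs0 htr) r.2

end SpecEq

open IsLocalRing in
theorem stmt13_general {T : Type*} [CommRing T] (R : Subring T) [IsLocalRing ↥R]
    (hic : integralClosure ↥R (FractionRing ↥R) = ⊥)
    (hneq : ¬ Function.Surjective (algebraMap ↥R (FractionRing ↥R)))
    (hfg : (maximalIdeal ↥R).FG)
    (hproper : R ≠ ⊤) : ¬ SpecEq R := by
  intro h
  obtain ⟨s, hs, hsu⟩ := exists_mem_nonZeroDivisors_not_isUnit hneq
  exact hproper <| h.eq_top hic (maximalIdeal.isMaximal _).isPrime hfg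
    ((mem_maximalIdeal s).mpr hsu) hs

open IsLocalRing in
/-- Let `R ∈ H₀` be an integrally closed local ring with `R ≠ T(R)` and
finitely generated maximal ideal.  Then there is no ring `T` properly containing `R` with
`Spec(R) = Spec(T)`: for any ring `T` and any realization of `R` as a proper subring of
`T`, `Spec(R) ≠ Spec(T)`. -/
theorem stmt13 {T : Type*} [CommRing T] (R : Subring T) [IsLocalRing ↥R]
    (h0 : MemH0 ↥R)
    (hic : integralClosure ↥R (FractionRing ↥R) = ⊥)
    (hneq : ¬ Function.Surjective (algebraMap ↥R (FractionRing ↥R)))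
    (hfg : (maximalIdeal ↥R).FG)
    (hproper : R ≠ ⊤) : ¬ SpecEq R :=
  stmt13_general R hic hneq hfg hproper
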